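/- arXiv:2302.05966 — 2 statements merged into one kernel-verified Lean document; each statement's English description precedes it below -/
import Mathlib

section
/- For a connected weighted graph with weighted Laplacian L_g, the algebraic connectivity satisfies λ_2(L_g) ≥ 2 / (n · R̃_max), where R̃_max is the maximum effective resistance over all vertex pairs; consequently λ_2(L_g) ≥ 2 / (n · D · R_max), where D is the graph diameter and R_max is the maximum effective resistance over edges. -/
open Matrix BigOperators

/-!
If `L v = μ v` with `μ > 0`, then `∑ v = 0` and `P v = v / μ`. As
`R i j = P i i + P j j - P i j - P j i`, every `x` with `∑ x = 0` satisfies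
`∑ i j, x i x j R i j = -2 xᵀ P x`, and `-x i x j ≤ (x i ^ 2 + x j ^ 2) / 2` turns this into
`2 |v|² / μ = 2 vᵀ P v ≤ n R̃_max |v|²`.

For the second bound, `u = P (e i - e j)` solves `L u = e i - e j`, so `L u ≥ 0` off `j` and the
minimum principle puts the minimum of `u` at `j`. Hence `R i j = u i - u j ≥ 0` and `R` satisfies
the triangle inequality; summing it along a shortest path gives `R̃_max ≤ D R_max`.
-/

/-- `P` is the Moore–Penrose pseudoinverse of `M`. -/
def IsMoorePenrose {n : ℕ} (M P : Matrix (Fin n) (Fin n) ℝ) : Prop :=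
  M * P * M = M ∧ P * M * P = P ∧ (M * P)ᵀ = M * P ∧ (P * M)ᵀ = P * M

namespace IsMoorePenrose

variable {n : ℕ} {M P Q : Matrix (Fin n) (Fin n) ℝ}

theorem transpose (hP : IsMoorePenrose M P) : IsMoorePenrose Mᵀ Pᵀ := by
  obtain ⟨h₁, h₂, h₃, h₄⟩ := hP
  refine ⟨?_, ?_, ?_, ?_⟩
  · rw [← transpose_mul, ← transpose_mul, ← Matrix.mul_assoc, h₁]
  · rw [← transpose_mul, ← transpose_mul, ← Matrix.mul_assoc, h₂]
  · rw [← transpose_mul, h₄, h₄]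
  · rw [← transpose_mul, h₃, h₃]

theorem unique (hP : IsMoorePenrose M P) (hQ : IsMoorePenrose M Q) : P = Q := by
  obtain ⟨hP₁, hP₂, hP₃, hP₄⟩ := hP
  obtain ⟨hQ₁, hQ₂, hQ₃, hQ₄⟩ := hQ
  have hP' : P = P * M * Q := calc
    P = P * (M * P)ᵀ := by rw [hP₃, ← Matrix.mul_assoc, hP₂]
    _ = P * (M * Q * (M * P))ᵀ := by rw [← Matrix.mul_assoc (M * Q) M P, hQ₁]
    _ = P * M * P * (M * Q) := by rw [transpose_mul, hP₃, hQ₃]; simp only [Matrix.mul_assoc]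
    _ = P * M * Q := by rw [hP₂, ← Matrix.mul_assoc]
  have hQ' : Q = P * M * Q := calc
    Q = (Q * M)ᵀ * Q := by rw [hQ₄, hQ₂]
    _ = (Q * M * (P * M))ᵀ * Q := by rw [Matrix.mul_assoc Q M, ← Matrix.mul_assoc M P M, hP₁]
    _ = P * M * (Q * M * Q) := by rw [transpose_mul, hP₄, hQ₄]; simp only [Matrix.mul_assoc]
    _ = P * M * Q := by rw [hQ₂]
  rw [hP', ← hQ']

theorem transpose_eq_self (hP : IsMoorePenrose M P) (hM : Mᵀ = M) : Pᵀ = P :=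
  (hM ▸ hP.transpose).unique hP

theorem mul_comm (hP : IsMoorePenrose M P) (hM : Mᵀ = M) : M * P = P * M := by
  rw [← hP.2.2.1, transpose_mul, hM, hP.transpose_eq_self hM]

end IsMoorePenrose

section WeightedLaplacian

variable {V : Type*} [Fintype V] [DecidableEq V] {W : Matrix V V ℝ}

def weightedLaplacian (W : Matrix V V ℝ) : Matrix V V ℝ :=
  Matrix.of fun i j => if i = j then ∑ k, W i k else -(W i j)

theorem isSymm_weightedLaplacian (hWsym : W.IsSymm) : (weightedLaplacian W).IsSymm := by
  ext i j
  by_cases h : i = j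
  · subst h; rfl
  · simp [weightedLaplacian, h, Ne.symm h, hWsym.apply]

theorem weightedLaplacian_mulVec_apply (hWdiag : ∀ i, W i i = 0) (x : V → ℝ) (i : V) :
    (weightedLaplacian W *ᵥ x) i = ∑ j, W i j * (x i - x j) := by
  have hentry : ∀ j, weightedLaplacian W i j * x j =
      (if i = j then (∑ k, W i k) * x i else 0) - W i j * x j := by
    intro j
    by_cases h : i = j
    · subst h; simp [weightedLaplacian, hWdiag]
    · simp [weightedLaplacian, h]
  simp only [mulVec, dotProduct, hentry, Finset.sum_sub_distrib, Finset.sum_ite_eq,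
    Finset.mem_univ, if_true, mul_sub, Finset.sum_mul]

theorem sum_weightedLaplacian_mulVec (hWsym : W.IsSymm) (hWdiag : ∀ i, W i i = 0)
    (x : V → ℝ) : ∑ i, (weightedLaplacian W *ᵥ x) i = 0 := by
  simp only [weightedLaplacian_mulVec_apply hWdiag]
  have hanti : ∑ i, ∑ j, W i j * (x i - x j) = -∑ i, ∑ j, W i j * (x i - x j) := by
    conv_lhs => rw [Finset.sum_comm]
    simp only [← Finset.sum_neg_distrib]
    refine Finset.sum_congr rfl fun i _ => Finset.sum_congr rfl fun j _ => ?_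
    rw [hWsym.apply]
    ring
  linarith

theorem sum_eq_zero_of_weightedLaplacian_mulVec_eq_smul (hWsym : W.IsSymm)
    (hWdiag : ∀ i, W i i = 0) {μ : ℝ} {v : V → ℝ} (hv : weightedLaplacian W *ᵥ v = μ • v)
    (hμ : μ ≠ 0) : ∑ i, v i = 0 := by
  have := sum_weightedLaplacian_mulVec hWsym hWdiag v
  simp only [hv, Pi.smul_apply, smul_eq_mul, ← Finset.mul_sum] at this
  exact (mul_eq_zero.1 this).resolve_left hμ

theorem eq_of_adj_of_forall_le_of_weightedLaplacian_mulVec_nonneg {G : SimpleGraph V}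
    (hadj : ∀ i j, G.Adj i j → 0 < W i j) (hWnonneg : ∀ i j, 0 ≤ W i j)
    (hWdiag : ∀ i, W i i = 0) {u : V → ℝ} {s t : V} (hmin : ∀ j, u s ≤ u j)
    (hLu : 0 ≤ (weightedLaplacian W *ᵥ u) s) (hst : G.Adj s t) : u t = u s := by
  rw [weightedLaplacian_mulVec_apply hWdiag] at hLu
  have hterm : ∀ j ∈ Finset.univ, W s j * (u s - u j) ≤ 0 := fun j _ =>
    mul_nonpos_of_nonneg_of_nonpos (hWnonneg s j) (sub_nonpos.2 (hmin j))
  have hzero := (Finset.sum_eq_zero_iff_of_nonpos hterm).1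
    (le_antisymm (Finset.sum_nonpos hterm) hLu) t (Finset.mem_univ t)
  rcases mul_eq_zero.1 hzero with hW | hu
  · exact absurd hW (hadj s t hst).ne'
  · exact (sub_eq_zero.1 hu).symm

theorem weightedLaplacian_minimum_principle {G : SimpleGraph V} (hG : G.Connected)
    (hadj : ∀ i j, G.Adj i j → 0 < W i j) (hWnonneg : ∀ i j, 0 ≤ W i j)
    (hWdiag : ∀ i, W i i = 0) {u : V → ℝ} {b : V}
    (hLu : ∀ s, s ≠ b → 0 ≤ (weightedLaplacian W *ᵥ u) s) (j : V) : u b ≤ u j := by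
  have : Nonempty V := ⟨b⟩
  obtain ⟨c, hc⟩ := Finite.exists_min u
  suffices hwalk : ∀ x y (p : G.Walk x y), y = b → u x = u c → u y = u c by
    rw [hwalk c b (hG.preconnected c b).some rfl rfl]
    exact hc j
  intro x y p
  induction p with
  | nil => exact fun _ h => h
  | @cons x t y hxt q ih =>
    intro hy hx
    by_cases hxb : x = b
    · subst hy hxb
      exact hx
    · have hmin : ∀ j, u x ≤ u j := hx ▸ hc
      exact ih hy ((eq_of_adj_of_forall_le_of_weightedLaplacian_mulVec_nonneg hadj hWnonneg
        hWdiag hmin (hLu x hxb) hxt).trans hx)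

theorem eq_zero_of_weightedLaplacian_mulVec_eq_zero {G : SimpleGraph V} (hG : G.Connected)
    (hadj : ∀ i j, G.Adj i j → 0 < W i j) (hWnonneg : ∀ i j, 0 ≤ W i j)
    (hWdiag : ∀ i, W i i = 0) {x : V → ℝ} (hLx : weightedLaplacian W *ᵥ x = 0)
    (hx : ∑ i, x i = 0) : x = 0 := by
  have hmin : ∀ i j, x i ≤ x j := fun i =>
    weightedLaplacian_minimum_principle hG hadj hWnonneg hWdiag fun s _ => by simp [hLx]
  funext i
  have hconst : ∑ j, x j = Fintype.card V * x i := by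
    simp [fun j => le_antisymm (hmin j i) (hmin i j)]
  have hcard : (Fintype.card V : ℝ) ≠ 0 := by
    have : Nonempty V := ⟨i⟩
    positivity
  simpa [hcard, hx] using hconst.symm

end WeightedLaplacian

section EffectiveResistance

variable {V : Type*} [Fintype V] [DecidableEq V] (P : Matrix V V ℝ)

def effectiveResistance (i j : V) : ℝ :=
  (Pi.single i 1 - Pi.single j 1) ⬝ᵥ (P *ᵥ (Pi.single i 1 - Pi.single j 1))

theorem effectiveResistance_self (i : V) : effectiveResistance P i i = 0 := by
  simp [effectiveResistance]

theorem effectiveResistance_eq_sub (i j : V) :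
    effectiveResistance P i j =
      (P *ᵥ (Pi.single i 1 - Pi.single j 1)) i - (P *ᵥ (Pi.single i 1 - Pi.single j 1)) j := by
  rw [effectiveResistance, sub_dotProduct, single_one_dotProduct, single_one_dotProduct]

theorem effectiveResistance_eq_entries (i j : V) :
    effectiveResistance P i j = P i i + P j j - P i j - P j i := by
  simp only [effectiveResistance_eq_sub, mulVec_sub, mulVec_single_one, Pi.sub_apply, col_apply]
  ring

theorem sum_sum_mul_effectiveResistance {x : V → ℝ} (hx : ∑ i, x i = 0) :
    ∑ i, ∑ j, x i * x j * effectiveResistance P i j = -2 * (x ⬝ᵥ (P *ᵥ x)) := by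
  have hdiag : ∑ i, ∑ j, x i * x j * P i i = 0 := by
    simp only [mul_right_comm (x _), ← Finset.mul_sum, hx, mul_zero, Finset.sum_const_zero]
  have hdiag' : ∑ i, ∑ j, x i * x j * P j j = 0 := by
    simp only [mul_assoc, ← Finset.mul_sum, ← Finset.sum_mul, hx, zero_mul]
  have hoff : ∑ i, ∑ j, x i * x j * P i j = x ⬝ᵥ (P *ᵥ x) := by
    simp only [dotProduct, mulVec, Finset.mul_sum]
    exact Finset.sum_congr rfl fun i _ => Finset.sum_congr rfl fun j _ => by ring
  have hoff' : ∑ i, ∑ j, x i * x j * P j i = x ⬝ᵥ (P *ᵥ x) := by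
    rw [Finset.sum_comm, ← hoff]
    exact Finset.sum_congr rfl fun i _ => Finset.sum_congr rfl fun j _ => by ring
  simp only [effectiveResistance_eq_entries, mul_sub, mul_add, Finset.sum_sub_distrib,
    Finset.sum_add_distrib, hdiag, hdiag', hoff, hoff']
  ring

theorem two_mul_dotProduct_mulVec_le {x : V → ℝ} (hx : ∑ i, x i = 0) {c : ℝ}
    (hR₀ : ∀ i j, 0 ≤ effectiveResistance P i j) (hRc : ∀ i j, effectiveResistance P i j ≤ c) :
    2 * (x ⬝ᵥ (P *ᵥ x)) ≤ Fintype.card V * c * (x ⬝ᵥ x) := calc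
  2 * (x ⬝ᵥ (P *ᵥ x)) = ∑ i, ∑ j, -(x i * x j * effectiveResistance P i j) := by
    simp only [Finset.sum_neg_distrib, sum_sum_mul_effectiveResistance P hx]
    ring
  _ ≤ ∑ i, ∑ j, (x i ^ 2 + x j ^ 2) / 2 * c := by
    gcongr with i _ j _
    -- `-x i x j R ≤ (x i ^ 2 + x j ^ 2) R / 2 ≤ (x i ^ 2 + x j ^ 2) c / 2`
    nlinarith [mul_nonneg (sq_nonneg (x i + x j)) (hR₀ i j),
      mul_nonneg (add_nonneg (sq_nonneg (x i)) (sq_nonneg (x j))) (sub_nonneg.2 (hRc i j))]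
  _ = Fintype.card V * c * (x ⬝ᵥ x) := by
    simp only [dotProduct, add_div, add_mul, Finset.sum_add_distrib, ← Finset.sum_mul,
      Finset.sum_const, Finset.card_univ, nsmul_eq_mul]
    rw [← Finset.mul_sum, ← Finset.sum_div]
    simp only [sq]
    ring

end EffectiveResistance

namespace IsMoorePenrose

variable {n : ℕ} {G : SimpleGraph (Fin n)} {W P : Matrix (Fin n) (Fin n) ℝ} {μ : ℝ}
  {v : Fin n → ℝ}

theorem sum_mulVec_eq_zero (hP : IsMoorePenrose (weightedLaplacian W) P) (hWsym : W.IsSymm)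
    (hWdiag : ∀ i, W i i = 0) (x : Fin n → ℝ) : ∑ i, (P *ᵥ x) i = 0 := by
  -- `P = P L P = (P L)ᵀ P = L Pᵀ P`
  have hP_eq : P = weightedLaplacian W * (Pᵀ * P) := by
    conv_lhs => rw [← hP.2.1, ← hP.2.2.2, transpose_mul, (isSymm_weightedLaplacian hWsym).eq]
    rw [Matrix.mul_assoc]
  rw [hP_eq, ← mulVec_mulVec]
  exact sum_weightedLaplacian_mulVec hWsym hWdiag _

theorem mulVec_weightedLaplacian_mulVec (hP : IsMoorePenrose (weightedLaplacian W) P)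
    (hG : G.Connected) (hadj : ∀ i j, G.Adj i j → 0 < W i j) (hWsym : W.IsSymm)
    (hWnonneg : ∀ i j, 0 ≤ W i j) (hWdiag : ∀ i, W i i = 0) {x : Fin n → ℝ}
    (hx : ∑ i, x i = 0) : P *ᵥ (weightedLaplacian W *ᵥ x) = x := by
  rw [← sub_eq_zero]
  refine eq_zero_of_weightedLaplacian_mulVec_eq_zero hG hadj hWnonneg hWdiag ?_ ?_
  · rw [mulVec_sub, mulVec_mulVec, mulVec_mulVec, hP.1, sub_self]
  · simp only [Pi.sub_apply, Finset.sum_sub_distrib, hP.sum_mulVec_eq_zero hWsym hWdiag, hx,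
      sub_self]

theorem weightedLaplacian_mulVec_mulVec (hP : IsMoorePenrose (weightedLaplacian W) P)
    (hG : G.Connected) (hadj : ∀ i j, G.Adj i j → 0 < W i j) (hWsym : W.IsSymm)
    (hWnonneg : ∀ i j, 0 ≤ W i j) (hWdiag : ∀ i, W i i = 0) {x : Fin n → ℝ}
    (hx : ∑ i, x i = 0) : weightedLaplacian W *ᵥ (P *ᵥ x) = x := by
  rw [mulVec_mulVec, hP.mul_comm (isSymm_weightedLaplacian hWsym), ← mulVec_mulVec,
    hP.mulVec_weightedLaplacian_mulVec hG hadj hWsym hWnonneg hWdiag hx]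

theorem mulVec_single_sub_single_apply_le (hP : IsMoorePenrose (weightedLaplacian W) P)
    (hG : G.Connected) (hadj : ∀ i j, G.Adj i j → 0 < W i j) (hWsym : W.IsSymm)
    (hWnonneg : ∀ i j, 0 ≤ W i j) (hWdiag : ∀ i, W i i = 0) (i j k : Fin n) :
    (P *ᵥ (Pi.single i 1 - Pi.single j 1)) j ≤ (P *ᵥ (Pi.single i 1 - Pi.single j 1)) k := by
  refine weightedLaplacian_minimum_principle hG hadj hWnonneg hWdiag (fun s hs => ?_) k
  rw [hP.weightedLaplacian_mulVec_mulVec hG hadj hWsym hWnonneg hWdiag (by simp)]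
  simp only [Pi.sub_apply, Pi.single_apply, hs, if_false, sub_zero]
  positivity

theorem effectiveResistance_nonneg (hP : IsMoorePenrose (weightedLaplacian W) P)
    (hG : G.Connected) (hadj : ∀ i j, G.Adj i j → 0 < W i j) (hWsym : W.IsSymm)
    (hWnonneg : ∀ i j, 0 ≤ W i j) (hWdiag : ∀ i, W i i = 0) (i j : Fin n) :
    0 ≤ effectiveResistance P i j := by
  rw [effectiveResistance_eq_sub, sub_nonneg]
  exact hP.mulVec_single_sub_single_apply_le hG hadj hWsym hWnonneg hWdiag i j i

theorem effectiveResistance_le_add (hP : IsMoorePenrose (weightedLaplacian W) P)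
    (hG : G.Connected) (hadj : ∀ i j, G.Adj i j → 0 < W i j) (hWsym : W.IsSymm)
    (hWnonneg : ∀ i j, 0 ≤ W i j) (hWdiag : ∀ i, W i i = 0) (i j k : Fin n) :
    effectiveResistance P i k ≤ effectiveResistance P i j + effectiveResistance P j k := by
  set u := P *ᵥ (Pi.single i 1 - Pi.single j 1)
  set w := P *ᵥ (Pi.single j 1 - Pi.single k 1)
  have hsplit : P *ᵥ (Pi.single i 1 - Pi.single k 1) = u + w := by
    rw [← mulVec_add, sub_add_sub_cancel]
  have hu : u j ≤ u k := hP.mulVec_single_sub_single_apply_le hG hadj hWsym hWnonneg hWdiag i j k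
  have hw : w i ≤ w j := by
    have := hP.mulVec_single_sub_single_apply_le hG hadj hWsym hWnonneg hWdiag k j i
    rwa [← neg_sub, mulVec_neg, Pi.neg_apply, Pi.neg_apply, neg_le_neg_iff] at this
  simp only [effectiveResistance_eq_sub, hsplit, Pi.add_apply]
  linarith

theorem mulVec_eq_inv_smul (hP : IsMoorePenrose (weightedLaplacian W) P)
    (hG : G.Connected) (hadj : ∀ i j, G.Adj i j → 0 < W i j) (hWsym : W.IsSymm)
    (hWnonneg : ∀ i j, 0 ≤ W i j) (hWdiag : ∀ i, W i i = 0)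
    (hv : weightedLaplacian W *ᵥ v = μ • v) (hμ : μ ≠ 0) : P *ᵥ v = μ⁻¹ • v := by
  have hv' : v = weightedLaplacian W *ᵥ (μ⁻¹ • v) := by
    rw [mulVec_smul, hv, smul_smul, inv_mul_cancel₀ hμ, one_smul]
  conv_lhs => rw [hv']
  refine hP.mulVec_weightedLaplacian_mulVec hG hadj hWsym hWnonneg hWdiag ?_
  simp [← Finset.mul_sum, sum_eq_zero_of_weightedLaplacian_mulVec_eq_smul hWsym hWdiag hv hμ]

theorem two_le_mul_of_weightedLaplacian_mulVec_eq_smul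
    (hP : IsMoorePenrose (weightedLaplacian W) P)
    (hG : G.Connected) (hadj : ∀ i j, G.Adj i j → 0 < W i j) (hWsym : W.IsSymm)
    (hWnonneg : ∀ i j, 0 ≤ W i j) (hWdiag : ∀ i, W i i = 0) {c : ℝ}
    (hc : ∀ i j, effectiveResistance P i j ≤ c) (hv₀ : v ≠ 0)
    (hv : weightedLaplacian W *ᵥ v = μ • v) (hμ : 0 < μ) : 2 ≤ μ * (n * c) := by
  have hvv : 0 < v ⬝ᵥ v := lt_of_le_of_ne (Finset.sum_nonneg fun i _ => mul_self_nonneg (v i))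
    (Ne.symm (dotProduct_self_eq_zero.not.2 hv₀))
  have hbound := two_mul_dotProduct_mulVec_le P
    (sum_eq_zero_of_weightedLaplacian_mulVec_eq_smul hWsym hWdiag hv hμ.ne')
    (hP.effectiveResistance_nonneg hG hadj hWsym hWnonneg hWdiag) hc
  rw [hP.mulVec_eq_inv_smul hG hadj hWsym hWnonneg hWdiag hv hμ.ne', dotProduct_smul,
    smul_eq_mul, Fintype.card_fin, ← mul_assoc, mul_le_mul_iff_left₀ hvv] at hbound
  calc (2 : ℝ) = μ * (2 * μ⁻¹) := by field_simp
    _ ≤ μ * (n * c) := by gcongr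

end IsMoorePenrose

namespace SimpleGraph

variable {V : Type*} {G : SimpleGraph V} {d : V → V → ℝ} {c : ℝ}

theorem Walk.le_length_mul_of_adj_le (hd : ∀ i j k, d i k ≤ d i j + d j k)
    (hd₀ : ∀ i, d i i = 0) (hc : ∀ i j, G.Adj i j → d i j ≤ c) {i j : V} (p : G.Walk i j) :
    d i j ≤ p.length * c := by
  induction p with
  | nil => simp [hd₀]
  | @cons i t j hit q ih =>
    rw [Walk.length_cons, Nat.cast_succ]
    linarith [hd i t j, hc i t hit]

theorem Connected.le_diam_mul_of_adj_le [Finite V] (hG : G.Connected)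
    (hd : ∀ i j k, d i k ≤ d i j + d j k) (hd₀ : ∀ i, d i i = 0)
    (hc : ∀ i j, G.Adj i j → d i j ≤ c) (hc₀ : 0 ≤ c) (i j : V) : d i j ≤ G.diam * c := by
  have : Nonempty V := ⟨i⟩
  obtain ⟨p, hp⟩ := hG.exists_walk_length_eq_dist i j
  calc d i j ≤ p.length * c := p.le_length_mul_of_adj_le hd hd₀ hc
    _ ≤ G.diam * c := by
      rw [hp]
      gcongr
      exact dist_le_diam (connected_iff_ediam_ne_top.1 hG)

end SimpleGraph

theorem lambda2_ge_of_effective_resistance_general {n : ℕ}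
    (G : SimpleGraph (Fin n)) (hG : G.Connected)
    (W : Matrix (Fin n) (Fin n) ℝ) (hWsym : Wᵀ = W) (hWnonneg : ∀ i j, 0 ≤ W i j)
    (hWdiag : ∀ i, W i i = 0) (hadj : ∀ i j, G.Adj i j ↔ 0 < W i j)
    (L : Matrix (Fin n) (Fin n) ℝ)
    (hL : L = Matrix.of fun i j => if i = j then ∑ k, W i k else -(W i j))
    (P : Matrix (Fin n) (Fin n) ℝ) (hP : IsMoorePenrose L P) :
    let R : Fin n → Fin n → ℝ := fun i j =>
      (Pi.single i 1 - Pi.single j 1) ⬝ᵥ (P *ᵥ (Pi.single i 1 - Pi.single j 1))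
    let Rtmax : ℝ := sSup {r : ℝ | ∃ i j, r = R i j}
    let Rmax : ℝ := sSup {r : ℝ | ∃ i j, G.Adj i j ∧ r = R i j}
    ∀ (μ : ℝ) (v : Fin n → ℝ), v ≠ 0 → L *ᵥ v = μ • v → 0 < μ →
      2 / ((n : ℝ) * Rtmax) ≤ μ ∧ 2 / ((n : ℝ) * (G.diam : ℝ) * Rmax) ≤ μ := by
  intro R Rtmax Rmax μ v hv₀ hv hμ
  subst hL
  change IsMoorePenrose (weightedLaplacian W) P at hP
  have hadj' i j := (hadj i j).1
  have hfinite : {r : ℝ | ∃ i j, r = R i j}.Finite :=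
    (Set.finite_range fun ij : Fin n × Fin n => R ij.1 ij.2).subset
      fun _ ⟨i, j, hr⟩ => ⟨(i, j), hr.symm⟩
  have hRtmax i j : R i j ≤ Rtmax := le_csSup hfinite.bddAbove ⟨i, j, rfl⟩
  have hRmax i j (hij : G.Adj i j) : R i j ≤ Rmax :=
    le_csSup (hfinite.subset fun _ (⟨i, j, _, hr⟩ : ∃ i j, G.Adj i j ∧ _) => ⟨i, j, hr⟩).bddAbove
      ⟨i, j, hij, rfl⟩
  have hR₀ := hP.effectiveResistance_nonneg hG hadj' hWsym hWnonneg hWdiag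
  have hRmax₀ : 0 ≤ Rmax := Real.sSup_nonneg fun _ ⟨i, j, _, hr⟩ => hr ▸ hR₀ i j
  obtain ⟨i₀, -⟩ := Function.ne_iff.1 hv₀
  have hRtmax₀ : 0 ≤ Rtmax := (hR₀ i₀ i₀).trans (hRtmax i₀ i₀)
  have hRtmax_le : Rtmax ≤ G.diam * Rmax := csSup_le ⟨_, i₀, i₀, rfl⟩ fun _ ⟨i, j, hr⟩ =>
    hr ▸ hG.le_diam_mul_of_adj_le (hP.effectiveResistance_le_add hG hadj' hWsym hWnonneg hWdiag)
      (effectiveResistance_self P) hRmax hRmax₀ i j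
  have h₂ : 2 ≤ μ * (n * Rtmax) :=
    hP.two_le_mul_of_weightedLaplacian_mulVec_eq_smul hG hadj' hWsym hWnonneg hWdiag hRtmax hv₀
      hv hμ
  refine ⟨div_le_of_le_mul₀ (by positivity) hμ.le h₂, div_le_of_le_mul₀ (by positivity) hμ.le ?_⟩
  calc 2 ≤ μ * (n * Rtmax) := h₂
    _ ≤ μ * (n * G.diam * Rmax) := by rw [mul_assoc (n : ℝ)]; gcongr

/-- For a connected weighted graph with weighted Laplacian `L`, every positive eigenvalue
`μ` of `L` (in particular the algebraic connectivity `λ₂`) satisfies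
`μ ≥ 2 / (n · R̃_max)` where `R̃_max` is the maximum effective resistance over vertex
pairs, and consequently `μ ≥ 2 / (n · D · R_max)` where `D` is the diameter and `R_max`
the maximum effective resistance over edges. -/
theorem lambda2_ge_of_effective_resistance {n : ℕ} (hn : 2 ≤ n)
    (G : SimpleGraph (Fin n)) (hG : G.Connected)
    (W : Matrix (Fin n) (Fin n) ℝ) (hWsym : Wᵀ = W) (hWnonneg : ∀ i j, 0 ≤ W i j)
    (hWdiag : ∀ i, W i i = 0) (hadj : ∀ i j, G.Adj i j ↔ 0 < W i j)
    (L : Matrix (Fin n) (Fin n) ℝ)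
    (hL : L = Matrix.of fun i j => if i = j then ∑ k, W i k else -(W i j))
    (P : Matrix (Fin n) (Fin n) ℝ) (hP : IsMoorePenrose L P) :
    let R : Fin n → Fin n → ℝ := fun i j =>
      (Pi.single i 1 - Pi.single j 1) ⬝ᵥ (P *ᵥ (Pi.single i 1 - Pi.single j 1))
    let Rtmax : ℝ := sSup {r : ℝ | ∃ i j, r = R i j}
    let Rmax : ℝ := sSup {r : ℝ | ∃ i j, G.Adj i j ∧ r = R i j}
    ∀ (μ : ℝ) (v : Fin n → ℝ), v ≠ 0 → L *ᵥ v = μ • v → 0 < μ →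
      2 / ((n : ℝ) * Rtmax) ≤ μ ∧ 2 / ((n : ℝ) * (G.diam : ℝ) * Rmax) ≤ μ :=
  lambda2_ge_of_effective_resistance_general G hG W hWsym hWnonneg hWdiag hadj L hL P hP
end

section
/- For a connected graph G with normalized ℓ_∞-Lewis weights g_lw (so that every edge effective resistance equals n−1), the AM-GM approximation bound holds: K_G(g_lw)/K*_G ≤ (2/(n(n−1)²)) K_G(g_lw), where K*_G is the optimal Kirchhoff index; this follows from the harmonic-mean representation K_G(g) = n(n−1)/HM(λ(L_g)), the identity AM(λ(L_g)) = 2/(n−1) for normalized weights, and HM ≤ AM. -/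
open BigOperators

/-- The AM–GM approximation bound for ℓ∞-Lewis weights: if `μ*` are the `n-1` positive
eigenvalues of the optimally weighted Laplacian (for normalized weights their arithmetic
mean is `2/(n-1)`), `K* = n(n-1)/HM(μ*)` is the optimal Kirchhoff index, and
`K_lw = n(n-1)/HM(μ_lw)` is the Kirchhoff index of the Lewis-weighted graph, then
`K_lw / K* ≤ (2/(n(n-1)²)) · K_lw`. -/
theorem am_gm_approx_bound (n : ℕ) (hn : 2 ≤ n)
    (μstar μlw : Fin (n - 1) → ℝ)
    (hμstar : ∀ i, 0 < μstar i) (hμlw : ∀ i, 0 < μlw i)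
    (hAM : (∑ i, μstar i) / ((n : ℝ) - 1) = 2 / ((n : ℝ) - 1))
    (Kstar Klw : ℝ)
    (hKstar : Kstar = (n : ℝ) * ((n : ℝ) - 1) / (((n : ℝ) - 1) / ∑ i, (μstar i)⁻¹))
    (hKlw : Klw = (n : ℝ) * ((n : ℝ) - 1) / (((n : ℝ) - 1) / ∑ i, (μlw i)⁻¹)) :
    Klw / Kstar ≤ (2 / ((n : ℝ) * ((n : ℝ) - 1) ^ 2)) * Klw := by
  have hn' : (2:ℝ) ≤ (n:ℝ) := by exact_mod_cast hn
  have hc : (0:ℝ) < (n:ℝ) - 1 := by linarith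
  have hc0 : ((n:ℝ) - 1) ≠ 0 := ne_of_gt hc
  have hnpos : (0:ℝ) < (n:ℝ) := by linarith
  -- sum of μstar is 2
  have hsum : (∑ i, μstar i) = 2 := by
    field_simp at hAM
    linarith [hAM]
  have hne : (Finset.univ : Finset (Fin (n-1))).Nonempty := by
    rw [Finset.univ_nonempty_iff]
    exact Fin.pos_iff_nonempty.mp (by omega)
  have hSstar : (0:ℝ) < ∑ i, (μstar i)⁻¹ :=
    Finset.sum_pos (fun i _ => inv_pos.mpr (hμstar i)) hne
  have hSlw : (0:ℝ) < ∑ i, (μlw i)⁻¹ :=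
    Finset.sum_pos (fun i _ => inv_pos.mpr (hμlw i)) hne
  have hKstar' : Kstar = (n:ℝ) * ∑ i, (μstar i)⁻¹ := by
    rw [hKstar]; field_simp
  have hKlw' : Klw = (n:ℝ) * ∑ i, (μlw i)⁻¹ := by
    rw [hKlw]; field_simp
  have hKlwpos : 0 < Klw := by rw [hKlw']; positivity
  -- Cauchy-Schwarz: (n-1)^2 ≤ (∑ μstar)(∑ μstar⁻¹) = 2 ∑ μstar⁻¹
  have hcs : ((n:ℝ) - 1)^2 ≤ 2 * ∑ i, (μstar i)⁻¹ := by
    have key := Finset.sum_sq_le_sum_mul_sum_of_sq_eq_mul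
      (Finset.univ : Finset (Fin (n-1))) (r := fun _ => (1:ℝ)) (f := μstar)
      (g := fun i => (μstar i)⁻¹)
      (fun i _ => (hμstar i).le) (fun i _ => (inv_pos.mpr (hμstar i)).le)
      (fun i _ => by
        rw [one_pow, mul_inv_cancel₀ (ne_of_gt (hμstar i))])
    have hone : (∑ _i : Fin (n-1), (1:ℝ)) = (n:ℝ) - 1 := by
      rw [Finset.sum_const, Finset.card_univ, Fintype.card_fin, nsmul_eq_mul, mul_one]
      have : ((n - 1 : ℕ) : ℝ) = (n:ℝ) - 1 := by
        rw [Nat.cast_sub (by omega)]; norm_num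
      exact this
    rw [hone, hsum] at key
    linarith
  have hKstarpos : 0 < Kstar := by rw [hKstar']; positivity
  rw [div_le_iff₀ hKstarpos]
  have h2 : (1:ℝ) ≤ 2 / ((n:ℝ) * ((n:ℝ) - 1)^2) * Kstar := by
    rw [div_mul_eq_mul_div, le_div_iff₀ (by positivity), one_mul, hKstar']
    nlinarith
  calc Klw = 1 * Klw := (one_mul Klw).symm
    _ ≤ (2 / ((n:ℝ) * ((n:ℝ) - 1)^2) * Kstar) * Klw :=
        mul_le_mul_of_nonneg_right h2 hKlwpos.le
    _ = 2 / ((n:ℝ) * ((n:ℝ) - 1)^2) * Klw * Kstar := by ring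
end
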